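/- arXiv:1808.10704 — 3 statements merged into one kernel-verified Lean document; each statement's English description precedes it below -/
import Mathlib

section
/- Let A be an n×n Metzler Hurwitz stable matrix, B ∈ ℝ^{n×m}, C ∈ ℝ^{m×n}, D ∈ ℝ^{m×m} entrywise nonnegative with ρ(D) < 1. If there exist strictly positive vectors p ∈ ℝ^n and q ∈ ℝ^m such that Ap + Bq ≺ 0 and Cp + (D - I)q ≺ 0 componentwise, then the spectral radius of C(-A)^{-1}B + D is strictly less than 1. -/
/-! Since `Bq ≥ 0`, the first inequality gives `Ap < 0` with `p > 0`. For a Metzler matrix this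
forces `Ax ≤ 0 → x ≥ 0`: at an index where the ratio `xᵢ / pᵢ` is minimal, with minimum `t < 0`,
the vector `x - t p ≥ 0` vanishes and so `(A (x - t p))ᵢ ≥ 0`, contradicting `(Ax)ᵢ ≤ 0 < t (Ap)ᵢ`.
Hence `A` is invertible with `(-A)⁻¹ ≥ 0`, so `E = C(-A)⁻¹B + D ≥ 0` and `(-A)⁻¹Bq ≤ p`, whence
`Eq ≤ Cp + Dq < q`. Finally, for an eigenvector `v` of the nonnegative `E` with eigenvalue `μ`,
`|μ| |v| ≤ E |v|`; evaluating at an index where `|vᵢ| / qᵢ` is maximal gives `|μ| < 1`. -/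

open Matrix

variable {ι : Type*} [Fintype ι]

lemma exists_smul_le_of_pos [Nonempty ι] (x : ι → ℝ) {p : ι → ℝ} (hp : ∀ i, 0 < p i) :
    ∃ t i, t • p ≤ x ∧ x i = t * p i := by
  obtain ⟨i, hi⟩ := Finite.exists_min fun j => x j / p j
  refine ⟨x i / p i, i, fun j => ?_, (div_mul_cancel₀ _ (hp i).ne').symm⟩
  simpa only [Pi.smul_apply, smul_eq_mul, ← le_div_iff₀ (hp j)] using hi j

lemma exists_le_smul_of_pos [Nonempty ι] (x : ι → ℝ) {p : ι → ℝ} (hp : ∀ i, 0 < p i) :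
    ∃ t i, x ≤ t • p ∧ x i = t * p i := by
  obtain ⟨t, i, hle, heq⟩ := exists_smul_le_of_pos (-x) hp
  refine ⟨-t, i, fun j => ?_, by simpa [neg_eq_iff_eq_neg] using heq⟩
  simpa using le_neg_of_le_neg (by simpa using hle j)

namespace Matrix

lemma mulVec_mono_of_nonneg {ι' : Type*} {X : Matrix ι' ι ℝ} (hX : ∀ i j, 0 ≤ X i j)
    {x y : ι → ℝ} (hxy : x ≤ y) : X *ᵥ x ≤ X *ᵥ y := fun i =>
  Finset.sum_le_sum fun j _ => mul_le_mul_of_nonneg_left (hxy j) (hX i j)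

lemma mul_apply_nonneg {ι' ι'' : Type*} {X : Matrix ι' ι ℝ} {Y : Matrix ι ι'' ℝ}
    (hX : ∀ i j, 0 ≤ X i j) (hY : ∀ i j, 0 ≤ Y i j) (i : ι') (k : ι'') : 0 ≤ (X * Y) i k :=
  Finset.sum_nonneg fun j _ => mul_nonneg (hX i j) (hY j k)

def IsMetzler (A : Matrix ι ι ℝ) : Prop := ∀ i j, i ≠ j → 0 ≤ A i j

variable {A : Matrix ι ι ℝ} {p : ι → ℝ}

lemma IsMetzler.mulVec_apply_nonneg (hA : A.IsMetzler) {y : ι → ℝ}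
    (hy : 0 ≤ y) {i : ι} (hyi : y i = 0) : 0 ≤ (A *ᵥ y) i :=
  Finset.sum_nonneg fun j _ => by
    rcases eq_or_ne i j with rfl | hij
    · simp [hyi]
    · exact mul_nonneg (hA i j hij) (hy j)

lemma IsMetzler.nonneg_of_mulVec_nonpos (hA : A.IsMetzler) (hp : ∀ i, 0 < p i)
    (hAp : ∀ i, (A *ᵥ p) i < 0) {x : ι → ℝ} (hx : A *ᵥ x ≤ 0) : 0 ≤ x := by
  intro k
  by_contra! hk
  have : Nonempty ι := ⟨k⟩
  obtain ⟨t, i, hle, heq⟩ := exists_smul_le_of_pos x hp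
  have ht : t < 0 := neg_of_mul_neg_left ((hle k).trans_lt hk) (hp k).le
  have hi : 0 ≤ (A *ᵥ (x - t • p)) i :=
    hA.mulVec_apply_nonneg (sub_nonneg.2 hle) (by simp [heq])
  rw [mulVec_sub, mulVec_smul, Pi.sub_apply, Pi.smul_apply, smul_eq_mul] at hi
  linarith [show (A *ᵥ x) i ≤ 0 from hx i, mul_pos_of_neg_of_neg ht (hAp i)]

lemma IsMetzler.isUnit [DecidableEq ι] (hA : A.IsMetzler) (hp : ∀ i, 0 < p i)
    (hAp : ∀ i, (A *ᵥ p) i < 0) : IsUnit A := by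
  rw [← mulVec_injective_iff_isUnit]
  intro x y hAxy
  have h : A *ᵥ (x - y) = 0 := by rw [mulVec_sub, hAxy, sub_self]
  have hle : 0 ≤ x - y := hA.nonneg_of_mulVec_nonpos hp hAp h.le
  have hge : 0 ≤ y - x := hA.nonneg_of_mulVec_nonpos hp hAp
    (by rw [← neg_sub, mulVec_neg, h, neg_zero])
  exact le_antisymm (sub_nonneg.1 hge) (sub_nonneg.1 hle)

lemma IsMetzler.inv_neg_nonneg [DecidableEq ι] (hA : A.IsMetzler) (hp : ∀ i, 0 < p i)
    (hAp : ∀ i, (A *ᵥ p) i < 0) (i j : ι) : 0 ≤ (-A)⁻¹ i j := by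
  have hu : IsUnit (-A).det := (isUnit_iff_isUnit_det _).1 (hA.isUnit hp hAp).neg
  have hcol : A *ᵥ ((-A)⁻¹ *ᵥ Pi.single j 1) = -Pi.single j 1 := by
    rw [mulVec_mulVec, show A * (-A)⁻¹ = -(-A * (-A)⁻¹) by rw [neg_mul, neg_neg],
      mul_nonsing_inv _ hu, neg_mulVec, one_mulVec]
  have := hA.nonneg_of_mulVec_nonpos hp hAp
    (hcol ▸ neg_nonpos.2 (Pi.single_nonneg.2 zero_le_one))
  simpa [mulVec_single_one] using this i

lemma exists_mulVec_eq_smul_of_mem_spectrum {K : Type*} [Field K] [DecidableEq ι]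
    {M : Matrix ι ι K} {μ : K} (hμ : μ ∈ spectrum K M) : ∃ v ≠ 0, M *ᵥ v = μ • v := by
  rw [← spectrum_toLin', ← Module.End.hasEigenvalue_iff_mem_spectrum] at hμ
  obtain ⟨v, hv⟩ := hμ.exists_hasEigenvector
  exact ⟨v, hv.2, hv.apply_eq_smul⟩

lemma norm_mul_norm_le_mulVec_norm {E : Matrix ι ι ℝ} (hE : ∀ i j, 0 ≤ E i j) {μ : ℂ}
    {v : ι → ℂ} (hv : E.map Complex.ofReal *ᵥ v = μ • v) (i : ι) :
    ‖μ‖ * ‖v i‖ ≤ (E *ᵥ fun j => ‖v j‖) i :=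
  calc ‖μ‖ * ‖v i‖ = ‖∑ j, (E i j : ℂ) * v j‖ := by
        rw [← norm_mul, ← smul_eq_mul, ← Pi.smul_apply, ← hv]; rfl
    _ ≤ ∑ j, ‖(E i j : ℂ) * v j‖ := norm_sum_le _ _
    _ = (E *ᵥ fun j => ‖v j‖) i := Finset.sum_congr rfl fun j _ => by
        rw [norm_mul, Complex.norm_real, Real.norm_of_nonneg (hE i j)]

lemma norm_lt_of_mulVec_lt_smul [DecidableEq ι] {E : Matrix ι ι ℝ} (hE : ∀ i j, 0 ≤ E i j)
    {q : ι → ℝ} (hq : ∀ i, 0 < q i) {c : ℝ} (hEq : ∀ i, (E *ᵥ q) i < c * q i) {μ : ℂ}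
    (hμ : μ ∈ spectrum ℂ (E.map Complex.ofReal)) : ‖μ‖ < c := by
  obtain ⟨v, hv0, hv⟩ := exists_mulVec_eq_smul_of_mem_spectrum hμ
  obtain ⟨k, hk⟩ := Function.ne_iff.1 hv0
  have : Nonempty ι := ⟨k⟩
  obtain ⟨t, i, hvt, hvi⟩ := exists_le_smul_of_pos (fun j => ‖v j‖) hq
  have ht : 0 < t := pos_of_mul_pos_left ((norm_pos_iff.2 hk).trans_le (hvt k)) (hq k).le
  have key : ‖μ‖ * (t * q i) < c * (t * q i) :=
    calc ‖μ‖ * (t * q i) = ‖μ‖ * ‖v i‖ := by rw [hvi]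
      _ ≤ (E *ᵥ fun j => ‖v j‖) i := norm_mul_norm_le_mulVec_norm hE hv i
      _ ≤ (E *ᵥ (t • q)) i := mulVec_mono_of_nonneg hE hvt i
      _ = t * (E *ᵥ q) i := by rw [mulVec_smul, Pi.smul_apply, smul_eq_mul]
      _ < t * (c * q i) := mul_lt_mul_of_pos_left (hEq i) ht
      _ = c * (t * q i) := by ring
  exact lt_of_mul_lt_mul_right key (mul_pos ht (hq i)).le

end Matrix

theorem spectralRadius_lt_one_of_vector_ineq_general
    {n m : ℕ} (A : Matrix (Fin n) (Fin n) ℝ) (B : Matrix (Fin n) (Fin m) ℝ)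
    (C : Matrix (Fin m) (Fin n) ℝ) (D : Matrix (Fin m) (Fin m) ℝ)
    (hA : ∀ i j, i ≠ j → 0 ≤ A i j)
    (hB : ∀ i j, 0 ≤ B i j) (hC : ∀ i j, 0 ≤ C i j) (hD : ∀ i j, 0 ≤ D i j)
    (p : Fin n → ℝ) (q : Fin m → ℝ)
    (hp : ∀ i, 0 < p i) (hq : ∀ j, 0 < q j)
    (h1 : ∀ i, A.mulVec p i + B.mulVec q i < 0)
    (h2 : ∀ j, C.mulVec p j + (D - 1).mulVec q j < 0) :
    ∀ μ ∈ spectrum ℂ ((C * (-A)⁻¹ * B + D).map Complex.ofReal), ‖μ‖ < 1 := by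
  have hBq : 0 ≤ B *ᵥ q := by
    simpa using mulVec_mono_of_nonneg hB (x := 0) fun j => (hq j).le
  have hAp : ∀ i, (A *ᵥ p) i < 0 := fun i => by
    linarith [h1 i, show 0 ≤ (B *ᵥ q) i from hBq i]
  have hN : ∀ i j, 0 ≤ (-A)⁻¹ i j := IsMetzler.inv_neg_nonneg hA hp hAp
  have hu : IsUnit (-A).det := (isUnit_iff_isUnit_det _).1 (IsMetzler.isUnit hA hp hAp).neg
  have hNBq : (-A)⁻¹ *ᵥ (B *ᵥ q) ≤ p :=
    calc (-A)⁻¹ *ᵥ (B *ᵥ q) ≤ (-A)⁻¹ *ᵥ (-A *ᵥ p) := mulVec_mono_of_nonneg hN fun i => by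
          rw [neg_mulVec, Pi.neg_apply]; linarith [h1 i]
      _ = p := by rw [mulVec_mulVec, nonsing_inv_mul _ hu, one_mulVec]
  refine fun μ => norm_lt_of_mulVec_lt_smul
    (fun i j => add_nonneg (mul_apply_nonneg (mul_apply_nonneg hC hN) hB i j) (hD i j)) hq
    fun j => ?_
  calc ((C * (-A)⁻¹ * B + D) *ᵥ q) j = (C *ᵥ ((-A)⁻¹ *ᵥ (B *ᵥ q))) j + (D *ᵥ q) j := by
        rw [add_mulVec, mulVec_mulVec, mulVec_mulVec, Matrix.mul_assoc, Pi.add_apply]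
    _ ≤ (C *ᵥ p) j + (D *ᵥ q) j := by gcongr; exact mulVec_mono_of_nonneg hC hNBq j
    _ < 1 * q j := by
        have hDq : ((D - 1) *ᵥ q) j = (D *ᵥ q) j - q j := by
          rw [sub_mulVec, one_mulVec, Pi.sub_apply]
        linarith [h2 j]

/-- If `A` is Metzler Hurwitz stable, `B, C, D` are nonnegative with `ρ(D) < 1`,
and strictly positive `p, q` satisfy `Ap + Bq ≺ 0` and `Cp + (D - I)q ≺ 0`,
then `ρ(C(-A)⁻¹B + D) < 1`. -/
theorem spectralRadius_lt_one_of_vector_ineq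
    {n m : ℕ} (A : Matrix (Fin n) (Fin n) ℝ) (B : Matrix (Fin n) (Fin m) ℝ)
    (C : Matrix (Fin m) (Fin n) ℝ) (D : Matrix (Fin m) (Fin m) ℝ)
    (hA : ∀ i j, i ≠ j → 0 ≤ A i j)
    (hAH : ∀ μ ∈ spectrum ℂ (A.map Complex.ofReal), μ.re < 0)
    (hB : ∀ i j, 0 ≤ B i j) (hC : ∀ i j, 0 ≤ C i j) (hD : ∀ i j, 0 ≤ D i j)
    (hρD : ∀ μ ∈ spectrum ℂ (D.map Complex.ofReal), ‖μ‖ < 1)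
    (p : Fin n → ℝ) (q : Fin m → ℝ)
    (hp : ∀ i, 0 < p i) (hq : ∀ j, 0 < q j)
    (h1 : ∀ i, A.mulVec p i + B.mulVec q i < 0)
    (h2 : ∀ j, C.mulVec p j + (D - 1).mulVec q j < 0) :
    ∀ μ ∈ spectrum ℂ ((C * (-A)⁻¹ * B + D).map Complex.ofReal), ‖μ‖ < 1 :=
  spectralRadius_lt_one_of_vector_ineq_general A B C D hA hB hC hD p q hp hq h1 h2
end

section
/- Let A be Metzler Hurwitz stable, B nonnegative, q ∈ ℝ^m fixed, and suppose x : [0,∞) → ℝ^n is differentiable with x'(t) ⪯ A x(t) + B q̃(t) componentwise where 0 ⪯ q̃(t) ⪯ q for all t ≥ 0, and x(0) = p. Then x(t) ⪯ -A^{-1}Bq + e^{At}(p + A^{-1}Bq) componentwise for all t ≥ 0, provided p + A^{-1}Bq ⪰ 0. -/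
/-!
Write `z(t) = -A⁻¹Bq + e^{tA}(p + A⁻¹Bq)`; it solves `z' = Az + Bq`, `z(0) = p`, while
`x' ⪯ Ax + Bq̃ ⪯ Ax + Bq` because `B ⪰ 0`. Hence `w = z - x` satisfies `w' ⪰ Aw`, `w(0) = 0`,
and for Metzler `A` such a `w` stays in the nonnegative orthant: adding `ε e^{ct} 𝟙`, with `c`
above every row sum of `A`, makes the inequality strict, so wherever a coordinate of the perturbed
function vanishes while the others are nonnegative, that coordinate is strictly increasing, and
continuous induction on `[0, t]` keeps it in the orthant. Letting `ε → 0` gives `x ⪯ z`.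
-/

open Filter Set Topology Matrix

theorem HasDerivAt.eventually_pos_nhdsGT {f : ℝ → ℝ} {f' x : ℝ} (hf : HasDerivAt f f' x)
    (hx : f x = 0) (hf' : 0 < f') : ∀ᶠ y in 𝓝[>] x, 0 < f y := by
  filter_upwards [nhdsGT_le_nhdsNE x
      ((hasDerivAt_iff_tendsto_slope.mp hf).eventually (eventually_gt_nhds hf')),
    self_mem_nhdsWithin] with y hslope hxy
  exact pos_of_slope_pos hxy hslope hx

def Matrix.IsMetzler_s16 {ι R : Type*} [Zero R] [LE R] (A : Matrix ι ι R) : Prop :=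
  ∀ i j, i ≠ j → 0 ≤ A i j

variable {ι : Type*} [Fintype ι]

theorem nonneg_of_hasDerivAt_pos_of_apply_eq_zero {u u' : ℝ → ι → ℝ}
    (hu : ∀ t, 0 ≤ t → HasDerivAt u (u' t) t) (h0 : 0 ≤ u 0)
    (hbdry : ∀ t, 0 ≤ t → 0 ≤ u t → ∀ i, u t i = 0 → 0 < u' t i) {t : ℝ} (ht : 0 ≤ t) :
    0 ≤ u t := by
  have hcont : ContinuousOn u (Icc 0 t) := fun s hs =>
    (hu s hs.1).continuousAt.continuousWithinAt
  have hclosed : IsClosed ({s | 0 ≤ u s} ∩ Icc 0 t) := by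
    rw [inter_comm]
    exact hcont.preimage_isClosed_of_isClosed isClosed_Icc isClosed_Ici
  refine hclosed.Icc_subset_of_forall_mem_nhdsWithin h0 (fun s ⟨hs, hs0, _⟩ => ?_) ⟨ht, le_rfl⟩
  suffices ∀ i, ∀ᶠ r in 𝓝[>] s, 0 ≤ u r i from eventually_all.mpr this
  intro i
  have hi := hasDerivAt_pi.mp (hu s hs0) i
  rcases (hs i).eq_or_lt with hzero | hpos
  · exact (hi.eventually_pos_nhdsGT hzero.symm (hbdry s hs0 hs i hzero.symm)).mono
      fun _ h => h.le
  · exact nhdsWithin_le_nhds (hi.continuousAt.eventually (eventually_ge_nhds hpos))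

theorem Matrix.IsMetzler_s16.mulVec_apply_nonneg {R : Type*} [Ring R] [PartialOrder R]
    [IsOrderedRing R] {A : Matrix ι ι R} (hA : A.IsMetzler_s16) {u : ι → R} (hu : 0 ≤ u) {i : ι}
    (hi : u i = 0) : 0 ≤ (A *ᵥ u) i :=
  Finset.sum_nonneg fun j _ => by
    rcases eq_or_ne i j with rfl | hij
    · simp [hi]
    · exact mul_nonneg (hA i j hij) (hu j)

theorem Matrix.mulVec_one_apply_le_sum_abs (A : Matrix ι ι ℝ) (i : ι) :
    (A *ᵥ 1) i ≤ ∑ k, ∑ j, |A k j| := by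
  simp only [mulVec, dotProduct, Pi.one_apply, mul_one]
  exact (Finset.sum_le_sum fun j _ => le_abs_self (A i j)).trans
    (Finset.single_le_sum (f := fun k => ∑ j, |A k j|)
      (fun _ _ => Finset.sum_nonneg fun _ _ => abs_nonneg _) (Finset.mem_univ i))

theorem Matrix.IsMetzler_s16.nonneg_of_hasDerivAt {A : Matrix ι ι ℝ}
    (hA : A.IsMetzler_s16) {w w' : ℝ → ι → ℝ} (hw : ∀ t, 0 ≤ t → HasDerivAt w (w' t) t)
    (hw' : ∀ t, 0 ≤ t → A *ᵥ w t ≤ w' t) (h0 : 0 ≤ w 0) {t : ℝ} (ht : 0 ≤ t) :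
    0 ≤ w t := by
  set c := ∑ k, ∑ j, |A k j| + 1
  have hperturbed : ∀ ε > 0, 0 ≤ w t + (ε * Real.exp (c * t)) • 1 := by
    intro ε hε
    refine nonneg_of_hasDerivAt_pos_of_apply_eq_zero
      (u := fun s => w s + (ε * Real.exp (c * s)) • 1)
      (u' := fun s => w' s + (ε * (Real.exp (c * s) * c)) • 1) (fun s hs => ?_) ?_ ?_ ht
    · simpa only [id, mul_one] using
        (hw s hs).fun_add ((((hasDerivAt_id s).const_mul c).exp.const_mul ε).smul_const 1)
    · simpa using add_nonneg h0 (smul_nonneg hε.le zero_le_one)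
    · intro s hs hu i hi
      have hAu := hA.mulVec_apply_nonneg hu hi
      have hmargin : 0 < ε * Real.exp (c * s) := mul_pos hε (Real.exp_pos _)
      have hrow := mul_le_mul_of_nonneg_left (A.mulVec_one_apply_le_sum_abs i) hmargin.le
      have := hw' s hs i
      simp only [mulVec_add, mulVec_smul, Pi.add_apply, Pi.smul_apply, Pi.one_apply, smul_eq_mul,
        mul_one] at hAu ⊢
      linarith
  intro i
  refine le_of_forall_pos_le_add fun ε hε => ?_
  have := hperturbed (ε / Real.exp (c * t)) (div_pos hε (Real.exp_pos _)) i
  simpa [div_mul_cancel₀ _ (Real.exp_pos (c * t)).ne'] using this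

theorem Matrix.IsMetzler_s16.le_of_hasDerivAt {A : Matrix ι ι ℝ} (hA : A.IsMetzler_s16)
    {x x' z z' : ℝ → ι → ℝ} (hx : ∀ t, 0 ≤ t → HasDerivAt x (x' t) t)
    (hz : ∀ t, 0 ≤ t → HasDerivAt z (z' t) t)
    (hxz : ∀ t, 0 ≤ t → x' t - A *ᵥ x t ≤ z' t - A *ᵥ z t) (h0 : x 0 ≤ z 0) {t : ℝ}
    (ht : 0 ≤ t) : x t ≤ z t := by
  refine sub_nonneg.mp (hA.nonneg_of_hasDerivAt (w := z - x) (w' := z' - x')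
    (fun s hs => (hz s hs).sub (hx s hs)) (fun s hs i => ?_) (sub_nonneg.mpr h0) ht)
  have := hxz s hs i
  simp only [Pi.sub_apply] at this
  simp only [mulVec_sub, Pi.sub_apply]
  linarith

theorem Matrix.mulVec_le_mulVec_of_nonneg {m : Type*} {B : Matrix m ι ℝ} (hB : ∀ i j, 0 ≤ B i j)
    {u v : ι → ℝ} (huv : u ≤ v) : B *ᵥ u ≤ B *ᵥ v := fun i =>
  dotProduct_le_dotProduct_of_nonneg_left huv (hB i)

theorem Matrix.isUnit_det_of_zero_notMem_spectrum [DecidableEq ι] {A : Matrix ι ι ℝ}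
    (h : (0 : ℂ) ∉ spectrum ℂ (A.map Complex.ofReal)) : IsUnit A.det := by
  rw [spectrum.zero_mem_iff, not_not, isUnit_iff_isUnit_det] at h
  have : (A.map Complex.ofReal).det = Complex.ofReal A.det := (Complex.ofRealHom.map_det A).symm
  rw [this] at h
  exact isUnit_iff_ne_zero.mpr (by simpa using h.ne_zero)

theorem Matrix.hasDerivAt_exp_smul_mulVec [DecidableEq ι] (A : Matrix ι ι ℝ) (v : ι → ℝ)
    (t : ℝ) :
    HasDerivAt (fun s : ℝ => NormedSpace.exp (s • A) *ᵥ v)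
      (A *ᵥ (NormedSpace.exp (t • A) *ᵥ v)) t := by
  let : NormedRing (Matrix ι ι ℝ) := Matrix.linftyOpNormedRing
  let : NormedAlgebra ℝ (Matrix ι ι ℝ) := Matrix.linftyOpNormedAlgebra
  let L := LinearMap.toContinuousLinearMap
    ((mulVecBilin ℝ ℝ : Matrix ι ι ℝ →ₗ[ℝ] (ι → ℝ) →ₗ[ℝ] ι → ℝ).flip v)
  rw [mulVec_mulVec]
  exact L.hasFDerivAt.comp_hasDerivAt t (hasDerivAt_exp_smul_const' A t)

theorem comparison_bound_general
    {n m : ℕ} (A : Matrix (Fin n) (Fin n) ℝ) (B : Matrix (Fin n) (Fin m) ℝ)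
    (hA : ∀ i j, i ≠ j → 0 ≤ A i j)
    (hAH : ∀ μ ∈ spectrum ℂ (A.map Complex.ofReal), μ.re < 0)
    (hB : ∀ i j, 0 ≤ B i j)
    (q : Fin m → ℝ) (p : Fin n → ℝ)
    (x : ℝ → Fin n → ℝ) (x' : ℝ → Fin n → ℝ) (qt : ℝ → Fin m → ℝ)
    (hx : ∀ t, 0 ≤ t → HasDerivAt x (x' t) t)
    (hineq : ∀ t, 0 ≤ t → ∀ i, x' t i ≤ A.mulVec (x t) i + B.mulVec (qt t) i)
    (hqt : ∀ t, 0 ≤ t → ∀ j, 0 ≤ qt t j ∧ qt t j ≤ q j)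
    (hx0 : x 0 = p) :
    ∀ t, 0 ≤ t → ∀ i,
      x t i ≤ (-(A⁻¹ * B)).mulVec q i
        + (NormedSpace.exp (t • A)).mulVec (fun j => p j + (A⁻¹ * B).mulVec q j) i := by
  intro t ht i
  have hdet : IsUnit A.det := isUnit_det_of_zero_notMem_spectrum fun h0 => (hAH 0 h0).false
  set C := (A⁻¹ * B) *ᵥ q
  have hAC : A *ᵥ C = B *ᵥ q := by
    rw [mulVec_mulVec, ← Matrix.mul_assoc, mul_nonsing_inv A hdet, Matrix.one_mul]
  let z : ℝ → Fin n → ℝ := fun s => -C + NormedSpace.exp (s • A) *ᵥ (p + C)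
  have hz (s : ℝ) : HasDerivAt z (A *ᵥ (NormedSpace.exp (s • A) *ᵥ (p + C))) s :=
    (A.hasDerivAt_exp_smul_mulVec _ s).const_add (-C)
  have hxz : x t ≤ z t := by
    refine IsMetzler_s16.le_of_hasDerivAt (A := A) hA hx (fun s _ => hz s) (fun s hs => ?_) ?_ ht
    · calc x' s - A *ᵥ x s ≤ B *ᵥ qt s := fun j => sub_le_iff_le_add'.mpr (hineq s hs j)
        _ ≤ B *ᵥ q := mulVec_le_mulVec_of_nonneg hB fun j => (hqt s hs j).2
        _ = _ := by simp [z, mulVec_add, mulVec_neg, hAC]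
    · simp [z, hx0]
  rw [neg_mulVec]
  exact hxz i

/-- Comparison principle: a function satisfying the differential inequality
`x' ⪯ A x + B q̃` with `0 ⪯ q̃(t) ⪯ q` and `x(0) = p` is bounded componentwise
by `-A⁻¹Bq + e^{At}(p + A⁻¹Bq)`, provided `p + A⁻¹Bq ⪰ 0`. -/
theorem comparison_bound
    {n m : ℕ} (A : Matrix (Fin n) (Fin n) ℝ) (B : Matrix (Fin n) (Fin m) ℝ)
    (hA : ∀ i j, i ≠ j → 0 ≤ A i j)
    (hAH : ∀ μ ∈ spectrum ℂ (A.map Complex.ofReal), μ.re < 0)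
    (hB : ∀ i j, 0 ≤ B i j)
    (q : Fin m → ℝ) (p : Fin n → ℝ)
    (x : ℝ → Fin n → ℝ) (x' : ℝ → Fin n → ℝ) (qt : ℝ → Fin m → ℝ)
    (hx : ∀ t, 0 ≤ t → HasDerivAt x (x' t) t)
    (hineq : ∀ t, 0 ≤ t → ∀ i, x' t i ≤ A.mulVec (x t) i + B.mulVec (qt t) i)
    (hqt : ∀ t, 0 ≤ t → ∀ j, 0 ≤ qt t j ∧ qt t j ≤ q j)
    (hx0 : x 0 = p)
    (hp : ∀ i, 0 ≤ p i + (A⁻¹ * B).mulVec q i) :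
    ∀ t, 0 ≤ t → ∀ i,
      x t i ≤ (-(A⁻¹ * B)).mulVec q i
        + (NormedSpace.exp (t • A)).mulVec (fun j => p j + (A⁻¹ * B).mulVec q j) i :=
  comparison_bound_general A B hA hAH hB q p x x' qt hx hineq hqt hx0
end

section
/- Let A be an n×n Metzler Hurwitz stable matrix, B ∈ ℝ^{n×m}, C ∈ ℝ^{m×n}, D ∈ ℝ^{m×m} nonnegative with ρ(D) < 1, and suppose A + B(I-D)^{-1}C is Hurwitz stable. Let ω̄ ∈ ℝ^n, d̄ ∈ ℝ^m be nonnegative. Then the block matrix M = [[A, B],[C, D-I]] is invertible and the vector [η; ς] := -M^{-1}[ω̄; d̄] is nonnegative and satisfies Aη + Bς + ω̄ = 0 and Cη + (D - I)ς + d̄ = 0, i.e., (η, ς) is a nonnegative equilibrium of the coupled differential-difference system with constant disturbances ω̄, d̄. -/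
/-!
Since `ρ(D) < 1`, the Neumann series `∑ Dᵏ` converges (Gelfand's formula), so `1 - D` is
invertible with a nonnegative inverse. The Schur complement of `D - 1` in
`M = [[A, B], [C, D - 1]]` is `H = A + B (1 - D)⁻¹ C`, a Metzler matrix with Hurwitz
spectrum. For small `t > 0` the matrix `1 + t H` is nonnegative with spectrum in the open
unit disc, so `-t H = 1 - (1 + t H)` has a nonnegative inverse by the same Neumann argument,
i.e. `H⁻¹ ⪯ 0`. The block inverse formula then shows `M⁻¹ ⪯ 0` entrywise, so
`-M⁻¹ [ω̄; d̄] ⪰ 0`, and it solves `M [η; ς] = -[ω̄; d̄]` by construction.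
-/

open Filter Topology Set

theorem summable_pow_of_spectralRadius_lt_one {A : Type*} [NormedRing A] [NormedAlgebra ℂ A]
    [CompleteSpace A] {a : A} (ha : spectralRadius ℂ a < 1) : Summable (a ^ ·) := by
  obtain ⟨r, hρr, hr1⟩ := ENNReal.lt_iff_exists_nnreal_btwn.mp ha
  have hroot : ∀ᶠ k : ℕ in atTop, ENNReal.ofReal (‖a ^ k‖ ^ (1 / k : ℝ)) < r :=
    (spectrum.pow_norm_pow_one_div_tendsto_nhds_spectralRadius a).eventually_lt_const hρr
  refine .of_norm_bounded_eventually_nat (summable_geometric_of_lt_one r.2 (mod_cast hr1)) ?_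
  filter_upwards [hroot, eventually_gt_atTop 0] with k hk hk0
  rw [ENNReal.ofReal_lt_iff_lt_toReal (by positivity) ENNReal.coe_ne_top, ENNReal.coe_toReal,
    one_div] at hk
  exact_mod_cast ((Real.rpow_inv_lt_iff_of_pos (norm_nonneg _) r.2 (Nat.cast_pos.mpr hk0)).mp
    hk).le

theorem eventually_norm_one_add_mul_lt_one {μ : ℂ} (hμ : μ.re < 0) :
    ∀ᶠ t : ℝ in 𝓝[>] 0, ‖1 + t * μ‖ < 1 := by
  have hnormSq : 0 < Complex.normSq μ := Complex.normSq_pos.mpr fun h => by simp [h] at hμ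
  filter_upwards [Ioo_mem_nhdsGT (div_pos (by linarith) hnormSq : 0 < -2 * μ.re / μ.normSq)]
    with t ⟨ht0, ht⟩
  rw [lt_div_iff₀ hnormSq, Complex.normSq_apply] at ht
  rw [← sq_lt_one_iff₀ (norm_nonneg _), Complex.sq_norm, Complex.normSq_apply]
  simp only [Complex.add_re, Complex.one_re, Complex.re_ofReal_mul, Complex.add_im,
    Complex.one_im, Complex.im_ofReal_mul, zero_add]
  nlinarith

namespace Matrix

theorem mul_apply_nonneg_s17 {α l m n : Type*} [Semiring α] [PartialOrder α] [IsOrderedRing α]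
    [Fintype m] {P : Matrix l m α} {Q : Matrix m n α}
    (hP : ∀ i j, 0 ≤ P i j) (hQ : ∀ i j, 0 ≤ Q i j) (i : l) (k : n) : 0 ≤ (P * Q) i k :=
  Finset.sum_nonneg fun j _ => mul_nonneg (hP i j) (hQ j k)

theorem mulVec_apply_nonneg {α m n : Type*} [Semiring α] [PartialOrder α] [IsOrderedRing α]
    [Fintype n] {P : Matrix m n α} {v : n → α}
    (hP : ∀ i j, 0 ≤ P i j) (hv : ∀ j, 0 ≤ v j) (i : m) : 0 ≤ (P *ᵥ v) i :=
  Finset.sum_nonneg fun j _ => mul_nonneg (hP i j) (hv j)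

section Spectral

variable {ι : Type*} [Fintype ι] [DecidableEq ι]

theorem isUnit_one_sub_and_inv_nonneg_of_nonneg {N : Matrix ι ι ℝ} (hN : ∀ i j, 0 ≤ N i j)
    (hσ : ∀ μ ∈ spectrum ℂ (N.map Complex.ofReal), ‖μ‖ < 1) :
    IsUnit (1 - N) ∧ ∀ i j, 0 ≤ (1 - N)⁻¹ i j := by
  -- Any submultiplicative norm serves for Gelfand's formula; the topology is the entrywise one.
  let : NormedRing (Matrix ι ι ℂ) := Matrix.linftyOpNormedRing
  let : NormedAlgebra ℂ (Matrix ι ι ℂ) := Matrix.linftyOpNormedAlgebra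
  have hρ : spectralRadius ℂ (N.map Complex.ofReal) < 1 := by
    rcases (spectrum ℂ (N.map Complex.ofReal)).eq_empty_or_nonempty with h | h
    · simp [spectralRadius, h]
    · exact_mod_cast spectrum.spectralRadius_lt_of_forall_lt_of_nonempty h (r := 1)
        fun μ hμ => mod_cast hσ μ hμ
  have hsum : Summable (N ^ ·) := by
    convert (summable_pow_of_spectralRadius_lt_one hρ).map
      Complex.reAddGroupHom.mapMatrix (continuous_id.matrix_map Complex.continuous_re) using 1
    funext k
    rw [Function.comp_apply, show N.map Complex.ofReal = N.map Complex.ofRealHom from rfl,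
      ← Matrix.map_pow]
    ext i j
    simp
  have hinv : (1 - N) * ∑' k, N ^ k = 1 := hsum.one_sub_mul_tsum_pow
  refine ⟨(isUnit_iff_isUnit_det _).mpr (isUnit_det_of_right_inverse hinv), fun i j => ?_⟩
  rw [inv_eq_right_inv hinv]
  exact (Pi.hasSum.mp (Pi.hasSum.mp hsum.hasSum i) j).nonneg
    fun k => pow_apply_nonneg hN k i j

theorem eventually_one_add_smul_nonneg {X : Matrix ι ι ℝ} (hX : ∀ i j, i ≠ j → 0 ≤ X i j) :
    ∀ᶠ t : ℝ in 𝓝[>] 0, ∀ i j, 0 ≤ (1 + t • X) i j := by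
  have hdiag : ∀ i, ∀ᶠ t : ℝ in 𝓝[>] 0, 0 < 1 + t * X i i := fun i =>
    nhdsWithin_le_nhds <| (continuous_const.add (continuous_id.mul continuous_const)).tendsto'
      0 1 (by simp) |>.eventually (lt_mem_nhds one_pos)
  filter_upwards [eventually_all.mpr hdiag, self_mem_nhdsWithin] with t hdiag (ht : 0 < t) i j
  rcases eq_or_ne i j with rfl | hij
  · simpa using (hdiag i).le
  · simpa [one_apply_ne hij] using mul_nonneg ht.le (hX i j hij)

theorem spectrum_map_ofReal_one_add_smul (X : Matrix ι ι ℝ) {t : ℝ} (ht : t ≠ 0) :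
    spectrum ℂ ((1 + t • X).map Complex.ofReal) =
      (fun ν : ℂ => 1 + t * ν) '' spectrum ℂ (X.map Complex.ofReal) := by
  have hmap : (1 + t • X).map Complex.ofReal =
      algebraMap ℂ _ 1 + Units.mk0 (t : ℂ) (mod_cast ht) • X.map Complex.ofReal := by
    ext i j
    by_cases h : i = j <;> simp [h, Units.smul_def]
  rw [hmap, ← spectrum.singleton_add_eq, spectrum.unit_smul_eq_smul, singleton_add,
    ← image_smul, image_image]
  rfl

theorem isUnit_and_inv_nonpos_of_metzler_of_hurwitz {X : Matrix ι ι ℝ}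
    (hX : ∀ i j, i ≠ j → 0 ≤ X i j) (hσ : ∀ μ ∈ spectrum ℂ (X.map Complex.ofReal), μ.re < 0) :
    IsUnit X ∧ ∀ i j, X⁻¹ i j ≤ 0 := by
  have hσN : ∀ᶠ t : ℝ in 𝓝[>] 0, ∀ μ ∈ spectrum ℂ (X.map Complex.ofReal), ‖1 + t * μ‖ < 1 :=
    (finite_spectrum _).eventually_all.mpr fun μ hμ => eventually_norm_one_add_mul_lt_one (hσ μ hμ)
  obtain ⟨t, ⟨hN, hσN⟩, ht⟩ :=
    ((eventually_one_add_smul_nonneg hX).and hσN |>.and self_mem_nhdsWithin).exists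
  obtain ⟨hU, hinv⟩ := isUnit_one_sub_and_inv_nonneg_of_nonneg hN <| by
    rw [spectrum_map_ofReal_one_add_smul X (ne_of_gt ht)]
    rintro _ ⟨μ, hμ, rfl⟩
    exact hσN μ hμ
  have hNX : (-t) • X = 1 - (1 + t • X) := by simp [neg_smul]
  have hright : X * ((-t) • (1 - (1 + t • X))⁻¹) = 1 := by
    rw [mul_smul_comm, ← smul_mul_assoc, hNX,
      mul_nonsing_inv _ ((isUnit_iff_isUnit_det _).mp hU)]
  refine ⟨(isUnit_iff_isUnit_det _).mpr (isUnit_det_of_right_inverse hright), fun i j => ?_⟩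
  rw [inv_eq_right_inv hright, smul_apply, smul_eq_mul]
  exact mul_nonpos_of_nonpos_of_nonneg (by linarith) (hinv i j)

end Spectral

theorem isUnit_fromBlocks_and_inv_nonpos {α m n : Type*} [CommRing α] [PartialOrder α]
    [IsOrderedRing α] [Fintype m] [Fintype n] [DecidableEq m] [DecidableEq n]
    {A : Matrix m m α} {B : Matrix m n α} {C : Matrix n m α} {D : Matrix n n α}
    (hB : ∀ i j, 0 ≤ B i j) (hC : ∀ i j, 0 ≤ C i j)
    (hD : IsUnit D) (hDinv : ∀ i j, D⁻¹ i j ≤ 0)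
    (hS : IsUnit (A - B * D⁻¹ * C)) (hSinv : ∀ i j, (A - B * D⁻¹ * C)⁻¹ i j ≤ 0) :
    IsUnit (fromBlocks A B C D) ∧ ∀ i j, (fromBlocks A B C D)⁻¹ i j ≤ 0 := by
  let := hD.invertible
  have hS' : IsUnit (A - B * ⅟D * C) := by rwa [invOf_eq_nonsing_inv]
  let := hS'.invertible
  let := fromBlocks₂₂Invertible A B C D
  set P := -(A - B * D⁻¹ * C)⁻¹
  set Q := -D⁻¹
  have hP : ∀ i j, 0 ≤ P i j := fun i j => neg_nonneg.mpr (hSinv i j)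
  have hQ : ∀ i j, 0 ≤ Q i j := fun i j => neg_nonneg.mpr (hDinv i j)
  have hinv : (fromBlocks A B C D)⁻¹ =
      -fromBlocks P (P * B * Q) (Q * C * P) (Q + Q * C * P * B * Q) := by
    rw [← invOf_eq_nonsing_inv, invOf_fromBlocks₂₂_eq, fromBlocks_neg]
    simp [P, Q, invOf_eq_nonsing_inv, Matrix.mul_assoc, add_comm]
  refine ⟨isUnit_of_invertible _, ?_⟩
  rw [hinv]
  rintro (i | i) (j | j) <;> simp only [neg_apply, fromBlocks_apply₁₁, fromBlocks_apply₁₂,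
    fromBlocks_apply₂₁, fromBlocks_apply₂₂, add_apply, neg_nonpos]
  · exact hP i j
  · exact mul_apply_nonneg_s17 (mul_apply_nonneg_s17 hP hB) hQ i j
  · exact mul_apply_nonneg_s17 (mul_apply_nonneg_s17 hQ hC) hP i j
  · have hQCP := mul_apply_nonneg_s17 (mul_apply_nonneg_s17 hQ hC) hP
    exact add_nonneg (hQ i j) (mul_apply_nonneg_s17 (mul_apply_nonneg_s17 hQCP hB) hQ i j)

end Matrix

open Matrix

theorem equilibrium_of_perturbed_cdde_general
    {n m : ℕ} (A : Matrix (Fin n) (Fin n) ℝ) (B : Matrix (Fin n) (Fin m) ℝ)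
    (C : Matrix (Fin m) (Fin n) ℝ) (D : Matrix (Fin m) (Fin m) ℝ)
    (hA : ∀ i j, i ≠ j → 0 ≤ A i j)
    (hB : ∀ i j, 0 ≤ B i j) (hC : ∀ i j, 0 ≤ C i j) (hD : ∀ i j, 0 ≤ D i j)
    (hρD : ∀ μ ∈ spectrum ℂ (D.map Complex.ofReal), ‖μ‖ < 1)
    (hH : ∀ μ ∈ spectrum ℂ ((A + B * (1 - D)⁻¹ * C).map Complex.ofReal), μ.re < 0)
    (ωbar : Fin n → ℝ) (dbar : Fin m → ℝ)
    (hω : ∀ i, 0 ≤ ωbar i) (hd : ∀ j, 0 ≤ dbar j) :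
    IsUnit (Matrix.fromBlocks A B C (D - 1)) ∧
    ∀ η : Fin n → ℝ, ∀ ς : Fin m → ℝ,
      (∀ i, η i = -(Matrix.fromBlocks A B C (D - 1))⁻¹.mulVec (Sum.elim ωbar dbar) (Sum.inl i)) →
      (∀ j, ς j = -(Matrix.fromBlocks A B C (D - 1))⁻¹.mulVec (Sum.elim ωbar dbar) (Sum.inr j)) →
      (∀ i, 0 ≤ η i) ∧ (∀ j, 0 ≤ ς j) ∧
      (∀ i, A.mulVec η i + B.mulVec ς i + ωbar i = 0) ∧
      (∀ j, C.mulVec η j + (D - 1).mulVec ς j + dbar j = 0) := by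
  obtain ⟨hDU, hW⟩ := isUnit_one_sub_and_inv_nonneg_of_nonneg hD hρD
  obtain ⟨hHU, hHinv⟩ := isUnit_and_inv_nonpos_of_metzler_of_hurwitz
    (X := A + B * (1 - D)⁻¹ * C)
    (fun i j hij => add_nonneg (hA i j hij) (mul_apply_nonneg_s17 (mul_apply_nonneg_s17 hB hW) hC i j)) hH
  have hDinv : (D - 1)⁻¹ = -(1 - D)⁻¹ := inv_eq_right_inv <| by
    rw [mul_neg, ← neg_mul, neg_sub, mul_nonsing_inv _ ((isUnit_iff_isUnit_det _).mp hDU)]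
  have hSchur : A - B * (D - 1)⁻¹ * C = A + B * (1 - D)⁻¹ * C := by
    rw [hDinv, Matrix.mul_neg, Matrix.neg_mul, sub_neg_eq_add]
  obtain ⟨hMU, hMinv⟩ := isUnit_fromBlocks_and_inv_nonpos hB hC (neg_sub 1 D ▸ hDU.neg)
    (fun i j => by simpa [hDinv] using hW i j) (hSchur ▸ hHU) (hSchur ▸ hHinv)
  refine ⟨hMU, fun η ς hη hς => ?_⟩
  have hv : Sum.elim η ς = (-(fromBlocks A B C (D - 1))⁻¹) *ᵥ Sum.elim ωbar dbar := by
    rw [neg_mulVec]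
    exact funext fun | .inl i => hη i | .inr j => hς j
  have hnonneg : ∀ k, 0 ≤ Sum.elim η ς k := hv ▸ mulVec_apply_nonneg
    (fun i j => neg_nonneg.mpr (hMinv i j)) fun | .inl i => hω i | .inr j => hd j
  have hMv : fromBlocks A B C (D - 1) *ᵥ Sum.elim η ς = -Sum.elim ωbar dbar := by
    rw [hv, neg_mulVec, mulVec_neg, mulVec_mulVec,
      mul_nonsing_inv _ ((isUnit_iff_isUnit_det _).mp hMU), one_mulVec]
  rw [fromBlocks_mulVec] at hMv
  refine ⟨fun i => hnonneg (.inl i), fun j => hnonneg (.inr j), fun i => ?_, fun j => ?_⟩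
  · simpa [eq_neg_iff_add_eq_zero] using congrFun hMv (.inl i)
  · simpa [eq_neg_iff_add_eq_zero] using congrFun hMv (.inr j)

/-- Under the spectral conditions, the block matrix `M = [[A,B],[C,D-I]]` is
invertible and `[η; ς] = -M⁻¹[ω̄; d̄]` is a nonnegative equilibrium of the
coupled differential–difference system with constant disturbances. -/
theorem equilibrium_of_perturbed_cdde
    {n m : ℕ} (A : Matrix (Fin n) (Fin n) ℝ) (B : Matrix (Fin n) (Fin m) ℝ)
    (C : Matrix (Fin m) (Fin n) ℝ) (D : Matrix (Fin m) (Fin m) ℝ)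
    (hA : ∀ i j, i ≠ j → 0 ≤ A i j)
    (hAH : ∀ μ ∈ spectrum ℂ (A.map Complex.ofReal), μ.re < 0)
    (hB : ∀ i j, 0 ≤ B i j) (hC : ∀ i j, 0 ≤ C i j) (hD : ∀ i j, 0 ≤ D i j)
    (hρD : ∀ μ ∈ spectrum ℂ (D.map Complex.ofReal), ‖μ‖ < 1)
    (hH : ∀ μ ∈ spectrum ℂ ((A + B * (1 - D)⁻¹ * C).map Complex.ofReal), μ.re < 0)
    (ωbar : Fin n → ℝ) (dbar : Fin m → ℝ)
    (hω : ∀ i, 0 ≤ ωbar i) (hd : ∀ j, 0 ≤ dbar j) :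
    IsUnit (Matrix.fromBlocks A B C (D - 1)) ∧
    ∀ η : Fin n → ℝ, ∀ ς : Fin m → ℝ,
      (∀ i, η i = -(Matrix.fromBlocks A B C (D - 1))⁻¹.mulVec (Sum.elim ωbar dbar) (Sum.inl i)) →
      (∀ j, ς j = -(Matrix.fromBlocks A B C (D - 1))⁻¹.mulVec (Sum.elim ωbar dbar) (Sum.inr j)) →
      (∀ i, 0 ≤ η i) ∧ (∀ j, 0 ≤ ς j) ∧
      (∀ i, A.mulVec η i + B.mulVec ς i + ωbar i = 0) ∧
      (∀ j, C.mulVec η j + (D - 1).mulVec ς j + dbar j = 0) :=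
  equilibrium_of_perturbed_cdde_general A B C D hA hB hC hD hρD hH ωbar dbar hω hd
end
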